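/- Suppose the test feature covariance is Σ = σ_x² I_d for some σ_x > 0, and let S₁ ⊆ S₂ ⊆ {1,…,d} with |S₁| ≥ n and X_{S₁} of full row rank. Then tr((X_{S₂} X_{S₂}ᵀ)^{-1}) ≤ tr((X_{S₁} X_{S₁}ᵀ)^{-1}), and consequently df_R(S₂) ≤ df_R(S₁). Moreover, if there exists j ∈ S₂∖S₁ such that (X_{S₁} X_{S₁}ᵀ)^{-1} x_{(j)} ≠ 0, then the inequality is strict. (Here X_{S₂} X_{S₂}ᵀ = X_{S₁} X_{S₁}ᵀ + Σ_{j ∈ S₂∖S₁} x_{(j)} x_{(j)}ᵀ.) -/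

import Mathlib

open Matrix

variable {n d : ℕ}

/-- The submatrix of `X` consisting of the columns indexed by `S`. -/
noncomputable def colSub (X : Matrix (Fin n) (Fin d) ℝ) (S : Finset (Fin d)) :
    Matrix (Fin n) {j // j ∈ S} ℝ :=
  Matrix.of fun i j => X i j.val

/-- The predictive model degrees of freedom of the minimum-ℓ₂-norm least squares model on
the variable subset `S` with isotropic test covariance `σ_x² I`:
`df_R(S) = n/2 + (n/2)·σ_x²·tr((X_S X_Sᵀ)⁻¹)`. -/
noncomputable def dfROver (X : Matrix (Fin n) (Fin d) ℝ) (σx : ℝ) (S : Finset (Fin d)) : ℝ :=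
  (n : ℝ) / 2 +
    ((n : ℝ) / 2) * σx ^ 2 * ((colSub X S * (colSub X S)ᵀ)⁻¹).trace

/-! The Gram matrix of `S₂` splits as `A + C` with `A = X_{S₁}X_{S₁}ᵀ` positive definite and
`C = X_{S₂∖S₁}X_{S₂∖S₁}ᵀ` positive semidefinite. The identity
`A⁻¹ - (A + C)⁻¹ = (A + C)⁻¹ (C + C A⁻¹ C) (A + C)⁻¹` exhibits the difference of the inverses
as positive semidefinite, so its trace is nonnegative; a positive semidefinite matrix of trace
zero vanishes, so equality of traces forces `A⁻¹ = (A + C)⁻¹`, i.e. `C = 0`, i.e. all new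
columns vanish. -/

namespace Matrix

section Field

variable {K m : Type*} [Field K] [Fintype m] [DecidableEq m]

theorem isUnit_of_rank_eq_card {A : Matrix m m K} (h : A.rank = Fintype.card m) : IsUnit A := by
  have hrange : LinearMap.range A.mulVecLin = ⊤ :=
    Submodule.eq_top_of_finrank_eq (h.trans (Module.finrank_fintype_fun_eq_card K).symm)
  rw [← mulVec_surjective_iff_isUnit, ← coe_mulVecLin]
  exact LinearMap.range_eq_top.mp hrange

theorem inv_sub_inv_add_eq {A C : Matrix m m K} (hA : IsUnit A) (hB : IsUnit (A + C)) :
    A⁻¹ - (A + C)⁻¹ = (A + C)⁻¹ * (C + C * A⁻¹ * C) * (A + C)⁻¹ := by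
  rw [isUnit_iff_isUnit_det] at hA hB
  calc A⁻¹ - (A + C)⁻¹ = (A + C)⁻¹ * (A + C) * A⁻¹ - (A + C)⁻¹ * (A * A⁻¹) := by
        rw [nonsing_inv_mul _ hB, mul_nonsing_inv _ hA, Matrix.one_mul, Matrix.mul_one]
    _ = (A + C)⁻¹ * C * A⁻¹ * ((A + C) * (A + C)⁻¹) := by
        rw [mul_nonsing_inv _ hB]; noncomm_ring
    _ = (A + C)⁻¹ * (C * (A⁻¹ * A) + C * A⁻¹ * C) * (A + C)⁻¹ := by noncomm_ring
    _ = (A + C)⁻¹ * (C + C * A⁻¹ * C) * (A + C)⁻¹ := by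
        rw [nonsing_inv_mul _ hA, Matrix.mul_one]

end Field

section RCLike

open scoped ComplexOrder

variable {𝕜 m : Type*} [RCLike 𝕜] [Fintype m] [DecidableEq m] {A C : Matrix m m 𝕜}

theorem posDef_mul_conjTranspose_of_rank_eq {l : Type*} [Fintype l] {X : Matrix m l 𝕜}
    (h : X.rank = Fintype.card m) : (X * Xᴴ).PosDef :=
  (posSemidef_self_mul_conjTranspose X).posDef_iff_isUnit.mpr
    (isUnit_of_rank_eq_card (by rw [rank_self_mul_conjTranspose, h]))

theorem PosDef.inv_sub_inv_add_posSemidef (hA : A.PosDef) (hC : C.PosSemidef) :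
    (A⁻¹ - (A + C)⁻¹).PosSemidef := by
  have hB : (A + C).PosDef := hA.add_posSemidef hC
  have hP : (C + C * A⁻¹ * C).PosSemidef := by
    simpa only [hC.1.eq] using hC.add (hA.inv.posSemidef.mul_mul_conjTranspose_same C)
  rw [inv_sub_inv_add_eq hA.isUnit hB.isUnit]
  simpa only [hB.inv.1.eq] using hP.conjTranspose_mul_mul_same (A + C)⁻¹

theorem PosDef.trace_inv_add_le (hA : A.PosDef) (hC : C.PosSemidef) :
    ((A + C)⁻¹).trace ≤ A⁻¹.trace :=
  sub_nonneg.mp (trace_sub A⁻¹ (A + C)⁻¹ ▸ (hA.inv_sub_inv_add_posSemidef hC).trace_nonneg)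

theorem PosDef.trace_inv_add_lt (hA : A.PosDef) (hC : C.PosSemidef) (hC0 : C ≠ 0) :
    ((A + C)⁻¹).trace < A⁻¹.trace := by
  refine (hA.trace_inv_add_le hC).lt_of_ne fun h => hC0 ?_
  have hinv : A⁻¹ = (A + C)⁻¹ := by
    rw [← sub_eq_zero, ← (hA.inv_sub_inv_add_posSemidef hC).trace_eq_zero_iff, trace_sub, h, sub_self]
  simpa using inv_inj hinv ((isUnit_iff_isUnit_det A).mp hA.isUnit)

end RCLike

end Matrix

section colSub

variable (X : Matrix (Fin n) (Fin d) ℝ)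

theorem colSub_mul_transpose_apply (S : Finset (Fin d)) (i k : Fin n) :
    (colSub X S * (colSub X S)ᵀ) i k = ∑ j ∈ S, X i j * X k j := by
  simp only [mul_apply, transpose_apply, colSub, of_apply]
  exact Finset.sum_coe_sort S fun j => X i j * X k j

theorem colSub_mul_transpose_eq_add_sdiff {S₁ S₂ : Finset (Fin d)} (h : S₁ ⊆ S₂) :
    colSub X S₂ * (colSub X S₂)ᵀ =
      colSub X S₁ * (colSub X S₁)ᵀ + colSub X (S₂ \ S₁) * (colSub X (S₂ \ S₁))ᵀ := by
  ext i k
  rw [Matrix.add_apply, colSub_mul_transpose_apply, colSub_mul_transpose_apply,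
    colSub_mul_transpose_apply, add_comm, Finset.sum_sdiff h]

theorem colSub_ne_zero {S : Finset (Fin d)} {j : Fin d} (hj : j ∈ S)
    (hx : (fun i => X i j) ≠ 0) : colSub X S ≠ 0 :=
  fun h => hx (funext fun i => congrFun (congrFun h i) ⟨j, hj⟩)

theorem dfROver_le_dfROver (σx : ℝ) {S T : Finset (Fin d)}
    (h : ((colSub X T * (colSub X T)ᵀ)⁻¹).trace ≤ ((colSub X S * (colSub X S)ᵀ)⁻¹).trace) :
    dfROver X σx T ≤ dfROver X σx S := by
  unfold dfROver
  gcongr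

theorem dfROver_lt_dfROver {σx : ℝ} (hσx : σx ≠ 0) {S T : Finset (Fin d)}
    (h : ((colSub X T * (colSub X T)ᵀ)⁻¹).trace < ((colSub X S * (colSub X S)ᵀ)⁻¹).trace) :
    dfROver X σx T < dfROver X σx S := by
  have hn : 0 < n := Nat.pos_of_ne_zero (by rintro rfl; simp at h)
  unfold dfROver
  gcongr

end colSub

theorem dfR_antitone_overparameterized_general
    (X : Matrix (Fin n) (Fin d) ℝ) (σx : ℝ) (hσx : 0 < σx)
    (S₁ S₂ : Finset (Fin d)) (hsub : S₁ ⊆ S₂)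
    (hrank : (colSub X S₁).rank = n) :
    ((colSub X S₂ * (colSub X S₂)ᵀ)⁻¹).trace ≤
        ((colSub X S₁ * (colSub X S₁)ᵀ)⁻¹).trace ∧
      dfROver X σx S₂ ≤ dfROver X σx S₁ ∧
      ((∃ j ∈ S₂ \ S₁, (colSub X S₁ * (colSub X S₁)ᵀ)⁻¹ *ᵥ (fun i => X i j) ≠ 0) →
        ((colSub X S₂ * (colSub X S₂)ᵀ)⁻¹).trace <
            ((colSub X S₁ * (colSub X S₁)ᵀ)⁻¹).trace ∧
          dfROver X σx S₂ < dfROver X σx S₁) := by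
  set A := colSub X S₁ * (colSub X S₁)ᵀ
  set C := colSub X (S₂ \ S₁) * (colSub X (S₂ \ S₁))ᵀ
  have hB : colSub X S₂ * (colSub X S₂)ᵀ = A + C := colSub_mul_transpose_eq_add_sdiff X hsub
  have hA : A.PosDef := by
    simpa only [conjTranspose_eq_transpose_of_trivial] using
      posDef_mul_conjTranspose_of_rank_eq (X := colSub X S₁) (by rwa [Fintype.card_fin])
  have hC : C.PosSemidef := by
    simpa only [conjTranspose_eq_transpose_of_trivial] using
      posSemidef_self_mul_conjTranspose (colSub X (S₂ \ S₁))
  have hle : ((A + C)⁻¹).trace ≤ A⁻¹.trace := hA.trace_inv_add_le hC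
  rw [← hB] at hle
  refine ⟨hle, dfROver_le_dfROver X σx hle, ?_⟩
  rintro ⟨j, hj, hAx⟩
  have hx : (fun i => X i j) ≠ 0 := fun h => hAx (by rw [h, mulVec_zero])
  have hC0 : C ≠ 0 := by
    simpa only [C, ← conjTranspose_eq_transpose_of_trivial, ne_eq, self_mul_conjTranspose_eq_zero]
      using colSub_ne_zero X hj hx
  have hlt : ((A + C)⁻¹).trace < A⁻¹.trace := hA.trace_inv_add_lt hC hC0
  rw [← hB] at hlt
  exact ⟨hlt, dfROver_lt_dfROver X hσx.ne' hlt⟩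

/-- With isotropic test covariance `σ_x² I`, for nested subsets
`S₁ ⊆ S₂` in the overparameterized regime (`|S₁| ≥ n`, `X_{S₁}` of full row rank),
`tr((X_{S₂}X_{S₂}ᵀ)⁻¹) ≤ tr((X_{S₁}X_{S₁}ᵀ)⁻¹)` and hence `df_R(S₂) ≤ df_R(S₁)`;
strictly so if some new column `x_{(j)}` is not annihilated by `(X_{S₁}X_{S₁}ᵀ)⁻¹`. -/
theorem dfR_antitone_overparameterized
    (X : Matrix (Fin n) (Fin d) ℝ) (σx : ℝ) (hσx : 0 < σx)
    (S₁ S₂ : Finset (Fin d)) (hsub : S₁ ⊆ S₂) (hcard : n ≤ S₁.card)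
    (hrank : (colSub X S₁).rank = n) :
    ((colSub X S₂ * (colSub X S₂)ᵀ)⁻¹).trace ≤
        ((colSub X S₁ * (colSub X S₁)ᵀ)⁻¹).trace ∧
      dfROver X σx S₂ ≤ dfROver X σx S₁ ∧
      ((∃ j ∈ S₂ \ S₁, (colSub X S₁ * (colSub X S₁)ᵀ)⁻¹ *ᵥ (fun i => X i j) ≠ 0) →
        ((colSub X S₂ * (colSub X S₂)ᵀ)⁻¹).trace <
            ((colSub X S₁ * (colSub X S₁)ᵀ)⁻¹).trace ∧
          dfROver X σx S₂ < dfROver X σx S₁) :=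
  dfR_antitone_overparameterized_general X σx hσx S₁ S₂ hsub hrank
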